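/- arXiv:2302.01879 — 2 statements merged into one kernel-verified Lean document; each statement's English description precedes it below -/
import Mathlib

section
/- Let ℓ₁ = ℝ×{0}×{0}, ℓ₂ = {0}×ℝ×{1/4}, ℓ₃ = {1/4}×{1/4}×ℝ, and let 𝓛 be the union of all integer translates ℓᵢ + ℤ³ for i = 1,2,3. Then any two distinct lines in 𝓛 are at Euclidean distance at least 1/4 from each other. -/
noncomputable section

def ell1 : Set (EuclideanSpace ℝ (Fin 3)) := {x | x 1 = 0 ∧ x 2 = 0}
def ell2 : Set (EuclideanSpace ℝ (Fin 3)) := {x | x 0 = 0 ∧ x 2 = 1 / 4}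
def ell3 : Set (EuclideanSpace ℝ (Fin 3)) := {x | x 0 = 1 / 4 ∧ x 1 = 1 / 4}

/-- The Hedlund family of lines: all `ℤ³`-translates of `ℓ₁, ℓ₂, ℓ₃`. -/
def hedlund : Set (Set (EuclideanSpace ℝ (Fin 3))) :=
  {S | ∃ k : Fin 3 → ℤ,
    S = (fun x => x + (WithLp.toLp 2 (fun j => (k j : ℝ)) : EuclideanSpace ℝ (Fin 3))) '' ell1 ∨
    S = (fun x => x + (WithLp.toLp 2 (fun j => (k j : ℝ)) : EuclideanSpace ℝ (Fin 3))) '' ell2 ∨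
    S = (fun x => x + (WithLp.toLp 2 (fun j => (k j : ℝ)) : EuclideanSpace ℝ (Fin 3))) '' ell3}

/-!
Every Hedlund line is parallel to a coordinate axis and its two fixed coordinates lie in `¼ℤ`,
so two lines that disagree in a coordinate fixed on both are at distance at least `1/4`.
Distinct parallel lines disagree in one of their common fixed coordinates; two lines in different
directions share exactly one fixed coordinate, and there one of them lies in `ℤ`, the other in `ℤ + 1/4`.
-/

def quarterLine {ι : Type*} (i : ι) (c : ι → ℤ) : Set (EuclideanSpace ℝ ι) :=
  {x | ∀ j ≠ i, 4 * x j = c j}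

lemma quarter_le_abs_div_four_sub_div_four {m n : ℤ} (h : m ≠ n) :
    (1 / 4 : ℝ) ≤ |(m : ℝ) / 4 - n / 4| := by
  have : (1 : ℝ) ≤ |(m : ℝ) - n| := by exact_mod_cast Int.one_le_abs (sub_ne_zero.mpr h)
  rw [← sub_div, abs_div, abs_of_pos (four_pos : (0 : ℝ) < 4)]
  linarith

lemma quarter_le_dist_of_mem_quarterLine {ι : Type*} [Fintype ι] {i i' j : ι} {c c' : ι → ℤ}
    {x y : EuclideanSpace ℝ ι} (hx : x ∈ quarterLine i c) (hy : y ∈ quarterLine i' c')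
    (hji : j ≠ i) (hji' : j ≠ i') (hc : c j ≠ c' j) : (1 / 4 : ℝ) ≤ dist x y :=
  calc (1 / 4 : ℝ) ≤ |(c j : ℝ) / 4 - c' j / 4| := quarter_le_abs_div_four_sub_div_four hc
    _ = dist (x j) (y j) := by rw [Real.dist_eq, ← hx j hji, ← hy j hji']; ring_nf
    _ ≤ dist x y := PiLp.dist_apply_le x y j

lemma quarterLine_congr {ι : Type*} {i : ι} {c c' : ι → ℤ} (h : ∀ j ≠ i, c j = c' j) :
    quarterLine i c = quarterLine i c' := by
  ext x
  exact forall₂_congr fun j hj => by rw [h j hj]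

/-- Row `i` is four times the fixed coordinates of `ℓᵢ₊₁`; its entry at the free coordinate `i` is
irrelevant. -/
def hedlundOffset : Fin 3 → Fin 3 → ℤ := ![![0, 0, 0], ![0, 0, 1], ![1, 1, 0]]

lemma exists_hedlundOffset_ne {i i' : Fin 3} (h : i ≠ i') :
    ∃ j, j ≠ i ∧ j ≠ i' ∧ hedlundOffset i j ≠ hedlundOffset i' j := by
  revert i i'
  decide

lemma hedlundOffset_emod_four (n : ℤ) (i j : Fin 3) :
    (4 * n + hedlundOffset i j) % 4 = hedlundOffset i j := by
  fin_cases i <;> fin_cases j <;> simp [hedlundOffset]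

lemma exists_quarterLine_eq_of_mem_hedlund {S : Set (EuclideanSpace ℝ (Fin 3))}
    (hS : S ∈ hedlund) : ∃ i c, S = quarterLine i c ∧ ∀ j, c j % 4 = hedlundOffset i j := by
  obtain ⟨k, hk⟩ := hS
  suffices ∃ i, S = quarterLine i fun j => 4 * k j + hedlundOffset i j by
    obtain ⟨i, hi⟩ := this
    exact ⟨i, _, hi, fun j => hedlundOffset_emod_four (k j) i j⟩
  rcases hk with rfl | rfl | rfl <;> [use 0; use 1; use 2] <;>
  · ext x
    simp [Set.image_add_right, quarterLine, ell1, ell2, ell3, Fin.forall_fin_succ, hedlundOffset]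
    grind

theorem stmt_5 (S T : Set (EuclideanSpace ℝ (Fin 3)))
    (hS : S ∈ hedlund) (hT : T ∈ hedlund) (hne : S ≠ T) :
    ∀ x ∈ S, ∀ y ∈ T, (1 / 4 : ℝ) ≤ dist x y := by
  obtain ⟨i, c, rfl, hc⟩ := exists_quarterLine_eq_of_mem_hedlund hS
  obtain ⟨i', c', rfl, hc'⟩ := exists_quarterLine_eq_of_mem_hedlund hT
  intro x hx y hy
  obtain ⟨j, hji, hji', hcj⟩ : ∃ j, j ≠ i ∧ j ≠ i' ∧ c j ≠ c' j := by
    by_cases hii' : i = i'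
    · subst hii'
      by_contra! h
      exact hne (quarterLine_congr fun j hj => h j hj hj)
    · obtain ⟨j, hji, hji', ho⟩ := exists_hedlundOffset_ne hii'
      exact ⟨j, hji, hji', fun h => ho (by rw [← hc, ← hc', h])⟩
  exact quarter_le_dist_of_mem_quarterLine hx hy hji hji' hcj
end
end

section
/- If a Lipschitz path σ : [0,t] → ℝ³ with ‖σ'‖ ≤ 8 a.e. visits the 1/100-neighborhoods of n distinct lines of the Hedlund family 𝓛 in temporal succession (leaving one neighborhood before entering the next), then the time spent outside all 1/100-neighborhoods is at least (n−1)/40, and hence n ≤ 40t + 1. -/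
noncomputable section

/-!
Distinct Hedlund lines are `δ = 1/4` apart. A `K`-Lipschitz path going from the
`r`-neighbourhood of a line `S` to that of another line must first raise its distance to `S`
from `r` to `δ - r`; this takes time at least `(δ - 2r) / K`, and on that stretch the path is
`r`-far from every line. The stretches between successive visits are disjoint, so their
lengths add up, and they all lie in `[0, t]`. With `r = 1/100` and `K = 8` each stretch
lasts at least `23/800 ≥ 1/40`.
-/

open Function Set Metric MeasureTheory
open scoped NNReal ENNReal

theorem LipschitzOnWith.exists_Ioo_mapsTo_Ioo {f : ℝ → ℝ} {K : ℝ≥0} {u v α β : ℝ}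
    (hf : LipschitzOnWith K f (Icc u v)) (huv : u ≤ v) (hu : f u ≤ α) (hv : β ≤ f v) :
    ∃ a b, u ≤ a ∧ b ≤ v ∧ β - α ≤ K * (b - a) ∧
      MapsTo f (Ioo a b) (Ioo α β) := by
  -- `b` is the first time `f` reaches `β`, `a` the last time before `b` that `f ≤ α`.
  set B := Icc u v ∩ f ⁻¹' Ici β
  have hBbdd : BddBelow B := ⟨u, fun s hs => hs.1.1⟩
  obtain ⟨⟨hub, hbv⟩, hfb⟩ : sInf B ∈ B :=
    (hf.continuousOn.preimage_isClosed_of_isClosed isClosed_Icc isClosed_Ici).csInf_mem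
      ⟨v, ⟨huv, le_rfl⟩, hv⟩ hBbdd
  set b := sInf B
  set A := Icc u b ∩ f ⁻¹' Iic α
  have hAbdd : BddAbove A := ⟨b, fun s hs => hs.1.2⟩
  obtain ⟨⟨hua, hab⟩, hfa⟩ : sSup A ∈ A :=
    ((hf.continuousOn.mono (Icc_subset_Icc_right hbv)).preimage_isClosed_of_isClosed
      isClosed_Icc isClosed_Iic).csSup_mem ⟨u, ⟨le_rfl, hub⟩, hu⟩ hAbdd
  set a := sSup A
  refine ⟨a, b, hua, hbv, ?_, fun s hs => ⟨?_, ?_⟩⟩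
  · calc β - α ≤ f b - f a := by linarith [show β ≤ f b from hfb, show f a ≤ α from hfa]
      _ ≤ dist (f b) (f a) := le_abs_self _
      _ ≤ K * dist b a := hf.dist_le_mul b ⟨hub, hbv⟩ a ⟨hua, hab.trans hbv⟩
      _ = K * (b - a) := by rw [Real.dist_eq, abs_of_nonneg (sub_nonneg.2 hab)]
  · by_contra! h
    exact hs.1.not_ge (le_csSup hAbdd ⟨⟨hua.trans hs.1.le, hs.2.le⟩, h⟩)
  · by_contra! h
    exact hs.2.not_ge (csInf_le hBbdd ⟨⟨hua.trans hs.1.le, hs.2.le.trans hbv⟩, h⟩)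

theorem le_infDist_add_infDist {X : Type*} [PseudoMetricSpace X] {S T : Set X} {δ : ℝ}
    (hS : S.Nonempty) (hT : T.Nonempty) (hST : ∀ p ∈ S, ∀ q ∈ T, δ ≤ dist p q) (x : X) :
    δ ≤ infDist x S + infDist x T := by
  have hT' : ∀ p ∈ S, δ - dist x p ≤ infDist x T := fun p hp =>
    (le_infDist hT).2 fun q hq => by linarith [hST p hp q hq, dist_triangle_left p q x]
  have hS' : δ - infDist x T ≤ infDist x S :=
    (le_infDist hS).2 fun p hp => by linarith [hT' p hp]
  linarith

theorem exists_Ioo_forall_lt_infDist_of_lipschitzOnWith {X : Type*} [PseudoMetricSpace X]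
    {F : Set (Set X)} {δ r : ℝ} {K : ℝ≥0} (hF : ∀ S ∈ F, S.Nonempty)
    (hsep : F.Pairwise fun S T => ∀ p ∈ S, ∀ q ∈ T, δ ≤ dist p q)
    {σ : ℝ → X} {u v : ℝ} (hσ : LipschitzOnWith K σ (Icc u v)) (huv : u ≤ v)
    {S T : Set X} (hS : S ∈ F) (hT : T ∈ F) (hST : S ≠ T)
    (hu : infDist (σ u) S ≤ r) (hv : infDist (σ v) T ≤ r) :
    ∃ a b, u ≤ a ∧ b ≤ v ∧ δ - 2 * r ≤ K * (b - a) ∧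
      ∀ s ∈ Ioo a b, ∀ ℓ ∈ F, r < infDist (σ s) ℓ := by
  have hf : LipschitzOnWith K (fun s => infDist (σ s) S) (Icc u v) := by
    simpa [Function.comp_def] using (lipschitz_infDist_pt S).comp_lipschitzOnWith hσ
  have hsum : ∀ x, ∀ ℓ ∈ F, ℓ ≠ S → δ ≤ infDist x S + infDist x ℓ :=
    fun x ℓ hℓ hℓS =>
      le_infDist_add_infDist (hF S hS) (hF ℓ hℓ) (hsep hS hℓ hℓS.symm) x
  obtain ⟨a, b, hua, hbv, hlen, hmaps⟩ := hf.exists_Ioo_mapsTo_Ioo (β := δ - r) huv hu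
    (by linarith [hsum (σ v) T hT hST.symm])
  refine ⟨a, b, hua, hbv, by linarith, fun s hs ℓ hℓ => ?_⟩
  obtain ⟨hr, hδ⟩ := hmaps hs
  rcases eq_or_ne ℓ S with rfl | hℓS
  · exact hr
  · linarith [hsum (σ s) ℓ hℓ hℓS]

theorem sum_ofReal_sub_le_volume {ι : Type*} [Fintype ι] [LinearOrder ι] {a b : ι → ℝ}
    (hab : ∀ i j, i < j → b i ≤ a j) {A : Set ℝ} (hA : ∀ i, Ioo (a i) (b i) ⊆ A) :
    ∑ i, ENNReal.ofReal (b i - a i) ≤ volume A := by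
  have hdisj : Pairwise (Disjoint on fun i => Ioo (a i) (b i)) := by
    intro i j hij
    rcases hij.lt_or_gt with h | h
    · exact Ioo_disjoint_Ioo.2 ((min_le_left _ _).trans ((hab i j h).trans (le_max_right _ _)))
    · exact Ioo_disjoint_Ioo.2 ((min_le_right _ _).trans ((hab j i h).trans (le_max_left _ _)))
  calc ∑ i, ENNReal.ofReal (b i - a i) = volume (⋃ i, Ioo (a i) (b i)) := by
        rw [measure_iUnion hdisj fun _ => measurableSet_Ioo, tsum_fintype]
        simp only [Real.volume_Ioo]
    _ ≤ volume A := measure_mono (iUnion_subset hA)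

theorem one_le_abs_intCast_sub_intCast {m n : ℤ} (h : m ≠ n) :
    (1 : ℝ) ≤ |(m : ℝ) - n| := by
  rw [← Int.cast_sub, ← Int.cast_abs]
  exact_mod_cast Int.one_le_abs (sub_ne_zero.2 h)

theorem quarter_le_abs_intCast_sub_intCast_add_quarter (m n : ℤ) :
    (1 / 4 : ℝ) ≤ |(m : ℝ) - (n + 1 / 4)| := by
  rcases le_or_gt m n with h | h
  · have : (m : ℝ) ≤ n := by exact_mod_cast h
    rw [abs_of_neg (by linarith)]
    linarith
  · have : (n : ℝ) + 1 ≤ m := by exact_mod_cast h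
    rw [abs_of_pos (by linarith)]
    linarith

section Hedlund

local notation "E³" => EuclideanSpace ℝ (Fin 3)

def lineX (b c : ℤ) : Set E³ := {y | y 1 = b ∧ y 2 = c}
def lineY (a c : ℤ) : Set E³ := {y | y 0 = a ∧ y 2 = c + 1 / 4}
def lineZ (a b : ℤ) : Set E³ := {y | y 0 = a + 1 / 4 ∧ y 1 = b + 1 / 4}

theorem exists_eq_lineX_or_lineY_or_lineZ {S : Set E³} (hS : S ∈ hedlund) :
    ∃ m n : ℤ, S = lineX m n ∨ S = lineY m n ∨ S = lineZ m n := by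
  obtain ⟨k, rfl | rfl | rfl⟩ := hS
  · refine ⟨k 1, k 2, Or.inl ?_⟩
    ext y
    simp [image_add_right, ell1, lineX, add_neg_eq_zero]
  · refine ⟨k 0, k 2, Or.inr (Or.inl ?_)⟩
    ext y
    simp [image_add_right, ell2, lineY, add_neg_eq_iff_eq_add, add_comm (4⁻¹ : ℝ)]
  · refine ⟨k 0, k 1, Or.inr (Or.inr ?_)⟩
    ext y
    simp [image_add_right, ell3, lineZ, add_neg_eq_iff_eq_add, add_comm (4⁻¹ : ℝ)]

theorem hedlund_nonempty : ∀ S ∈ hedlund, S.Nonempty := by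
  rintro S ⟨k, rfl | rfl | rfl⟩ <;> refine Nonempty.image _ ?_
  · exact ⟨0, by simp [ell1]⟩
  · exact ⟨WithLp.toLp 2 ![0, 0, 1 / 4], by simp [ell2]⟩
  · exact ⟨WithLp.toLp 2 ![1 / 4, 1 / 4, 0], by simp [ell3]⟩

theorem hedlund_pairwise_quarter_le_dist :
    hedlund.Pairwise fun S T => ∀ p ∈ S, ∀ q ∈ T, 1 / 4 ≤ dist p q := by
  intro S hS T hT hST p hp q hq
  have coord : ∀ j, 1 / 4 ≤ |p j - q j| → 1 / 4 ≤ dist p q := fun j h =>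
    h.trans (by simpa [Real.dist_eq] using PiLp.dist_apply_le p q j)
  have int_gap : ∀ {m n : ℤ}, m ≠ n → (1 / 4 : ℝ) ≤ |(m : ℝ) - n| := fun h =>
    (one_le_abs_intCast_sub_intCast h).trans' (by norm_num)
  have quarter_gap := quarter_le_abs_intCast_sub_intCast_add_quarter
  obtain ⟨a, b, rfl | rfl | rfl⟩ := exists_eq_lineX_or_lineY_or_lineZ hS <;>
    obtain ⟨a', b', rfl | rfl | rfl⟩ := exists_eq_lineX_or_lineY_or_lineZ hT <;>
    obtain ⟨hp₁, hp₂⟩ := hp <;> obtain ⟨hq₁, hq₂⟩ := hq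
  · rcases ne_or_eq a a' with h | rfl
    · exact coord 1 (by rw [hp₁, hq₁]; exact int_gap h)
    rcases ne_or_eq b b' with h | rfl
    · exact coord 2 (by rw [hp₂, hq₂]; exact int_gap h)
    exact absurd rfl hST
  · exact coord 2 (by rw [hp₂, hq₂]; exact quarter_gap b b')
  · exact coord 1 (by rw [hp₁, hq₂]; exact quarter_gap a b')
  · exact coord 2 (by rw [hp₂, hq₂, abs_sub_comm]; exact quarter_gap b' b)
  · rcases ne_or_eq a a' with h | rfl
    · exact coord 0 (by rw [hp₁, hq₁]; exact int_gap h)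
    rcases ne_or_eq b b' with h | rfl
    · exact coord 2 (by rw [hp₂, hq₂, add_sub_add_right_eq_sub]; exact int_gap h)
    exact absurd rfl hST
  · exact coord 0 (by rw [hp₁, hq₁]; exact quarter_gap a a')
  · exact coord 1 (by rw [hp₂, hq₁, abs_sub_comm]; exact quarter_gap a' b)
  · exact coord 0 (by rw [hp₁, hq₁, abs_sub_comm]; exact quarter_gap a' a)
  · rcases ne_or_eq a a' with h | rfl
    · exact coord 0 (by rw [hp₁, hq₁, add_sub_add_right_eq_sub]; exact int_gap h)
    rcases ne_or_eq b b' with h | rfl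
    · exact coord 1 (by rw [hp₂, hq₂, add_sub_add_right_eq_sub]; exact int_gap h)
    exact absurd rfl hST

theorem exists_Ioo_forall_lt_infDist_hedlund {σ : ℝ → E³} {u v : ℝ}
    (hσ : LipschitzOnWith 8 σ (Icc u v)) (huv : u ≤ v) {S T : Set E³} (hS : S ∈ hedlund)
    (hT : T ∈ hedlund) (hST : S ≠ T) (hu : infDist (σ u) S ≤ 1 / 100)
    (hv : infDist (σ v) T ≤ 1 / 100) :
    ∃ a b, u ≤ a ∧ b ≤ v ∧ 1 / 40 ≤ b - a ∧
      ∀ s ∈ Ioo a b, ∀ ℓ ∈ hedlund, 1 / 100 < infDist (σ s) ℓ := by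
  obtain ⟨a, b, ha, hb, hlen, hout⟩ := exists_Ioo_forall_lt_infDist_of_lipschitzOnWith
    hedlund_nonempty hedlund_pairwise_quarter_le_dist hσ huv hS hT hST hu hv
  push_cast at hlen
  exact ⟨a, b, ha, hb, by linarith, hout⟩

theorem ofReal_div_le_volume_forall_lt_infDist_hedlund {t : ℝ} {σ : ℝ → E³}
    (hσ : LipschitzOnWith 8 σ (Icc 0 t)) {m : ℕ} {L : Fin (m + 1) → Set E³}
    (hL : ∀ i, L i ∈ hedlund) (hLne : ∀ i : Fin m, L i.castSucc ≠ L i.succ)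
    {τ : Fin (m + 1) → ℝ} (hτmono : Monotone τ) (hτmem : ∀ i, τ i ∈ Icc 0 t)
    (hvisit : ∀ i, infDist (σ (τ i)) (L i) ≤ 1 / 100) :
    ENNReal.ofReal (m / 40) ≤
      volume {s ∈ Icc 0 t | ∀ ℓ ∈ hedlund, 1 / 100 < infDist (σ s) ℓ} := by
  choose a b ha hb hlen hout using fun i : Fin m =>
    exists_Ioo_forall_lt_infDist_hedlund (hσ.mono (Icc_subset_Icc (hτmem _).1 (hτmem _).2))
      (hτmono Fin.castSucc_lt_succ.le) (hL _) (hL _) (hLne i) (hvisit _) (hvisit _)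
  have hsep (i j : Fin m) (hij : i < j) : b i ≤ a j :=
    (hb i).trans ((hτmono (Fin.succ_le_castSucc_iff.2 hij)).trans (ha j))
  have hsub (i : Fin m) :
      Ioo (a i) (b i) ⊆ {s ∈ Icc 0 t | ∀ ℓ ∈ hedlund, 1 / 100 < infDist (σ s) ℓ} :=
    fun s hs => ⟨⟨(hτmem _).1.trans ((ha i).trans hs.1.le),
      hs.2.le.trans ((hb i).trans (hτmem _).2)⟩, hout i s hs⟩
  calc ENNReal.ofReal (m / 40) = ∑ _i : Fin m, ENNReal.ofReal (1 / 40) := by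
        simp [ENNReal.ofReal_mul, div_eq_mul_inv]
    _ ≤ ∑ i, ENNReal.ofReal (b i - a i) := by gcongr with i; exact hlen i
    _ ≤ _ := sum_ofReal_sub_le_volume hsep hsub

end Hedlund

/-- If an `8`-Lipschitz path on `[0, t]` visits the `1/100`-neighborhoods of
`n` pairwise distinct lines of the Hedlund family at successive times, then it
spends time at least `(n-1)/40` outside all the neighborhoods, and
consequently `n ≤ 40 t + 1`. -/
theorem stmt_17 (t : ℝ) (ht : 0 < t)
    (σ : ℝ → EuclideanSpace ℝ (Fin 3))
    (hσ : LipschitzOnWith 8 σ (Set.Icc 0 t))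
    (n : ℕ) (L : Fin n → Set (EuclideanSpace ℝ (Fin 3)))
    (hL : ∀ i, L i ∈ hedlund) (hLinj : Function.Injective L)
    (τ : Fin n → ℝ) (hτmono : StrictMono τ) (hτmem : ∀ i, τ i ∈ Set.Icc 0 t)
    (hvisit : ∀ i, Metric.infDist (σ (τ i)) (L i) ≤ 1 / 100) :
    ENNReal.ofReal (((n : ℝ) - 1) / 40) ≤
      MeasureTheory.volume
        {s ∈ Set.Icc 0 t | ∀ ℓ ∈ hedlund, 1 / 100 < Metric.infDist (σ s) ℓ} ∧
    (n : ℝ) ≤ 40 * t + 1 := by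
  have hvol : ENNReal.ofReal (((n : ℝ) - 1) / 40) ≤
      volume {s ∈ Icc 0 t | ∀ ℓ ∈ hedlund, 1 / 100 < infDist (σ s) ℓ} := by
    cases n with
    | zero => simp [ENNReal.ofReal_eq_zero.2 (by norm_num : (-1 : ℝ) / 40 ≤ 0)]
    | succ m =>
      simpa using ofReal_div_le_volume_forall_lt_infDist_hedlund hσ hL
        (fun i => hLinj.ne Fin.castSucc_lt_succ.ne) hτmono.monotone hτmem hvisit
  refine ⟨hvol, ?_⟩
  have := hvol.trans ((measure_mono fun s hs => hs.1).trans_eq (Real.volume_Icc (a := 0) (b := t)))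
  rcases ENNReal.ofReal_le_ofReal_iff'.1 this with h | h <;> linarith
end
end
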